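/- arXiv:2110.11549 — 6 statements merged into one kernel-verified Lean document; each statement's English description precedes it below -/
import Mathlib

section
/- For nonnegative integers a, b, c, d and positive integer t, define G(a,b,c,d,t) = ∑_{j=0}^{t·min(a,d)} F(a,b,j,t)·F(c,d,-j,t), where F is the bounded-coordinate solution count. Then G(a,b,c,d,t) + G(b,a,d,c,t) = F(a+c,b+d,0,t) + F(a,b,0,t)·F(c,d,0,t). -/
/-!
Splitting the coordinates of a solution counted by `F (a + c) (b + d) 0 t` into the first `a + b`
and the last `c + d` writes it as the convolution `∑ j, F a b j t * F c d (-j) t` over all `j`.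
`G a b c d t` is the part `j ≥ 0` of this sum (the terms with `j > t * min a d` vanish), and, since
the reflection `x ↦ t - x` gives `F a b c t = F b a (-c) t`, `G b a d c t` is the part `j ≤ 0`.
The term `j = 0` is counted twice.
-/

def F (a b : ℕ) (c : ℤ) (t : ℕ) : ℕ :=
  (Finset.univ.filter
    (fun x : Fin (a + b) → Fin (t + 1) => ∑ i, (x i : ℤ) = b * t + c)).card

/-- G(a,b,c,d,t) = ∑_{j=0}^{t·min(a,d)} F(a,b,j,t)·F(c,d,-j,t). -/
def G (a b c d t : ℕ) : ℕ :=
  ∑ j ∈ Finset.range (t * min a d + 1), F a b (j : ℤ) t * F c d (-(j : ℤ)) t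

open Finset

def boundedSumCount (ι : Type*) [Fintype ι] [DecidableEq ι] (t : ℕ) (n : ℤ) : ℕ :=
  #{x : ι → Fin (t + 1) | ∑ i, (x i : ℤ) = n}

lemma sum_val_mem_Icc {ι : Type*} [Fintype ι] {t : ℕ} (x : ι → Fin (t + 1)) :
    ∑ i, (x i : ℤ) ∈ Icc (0 : ℤ) (Fintype.card ι * t) := by
  refine mem_Icc.2 ⟨sum_nonneg fun i _ ↦ by positivity, ?_⟩
  calc ∑ i, (x i : ℤ) ≤ ∑ _i : ι, (t : ℤ) :=
        sum_le_sum fun i _ ↦ by exact_mod_cast Fin.is_le (x i)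
    _ = Fintype.card ι * t := by simp

namespace boundedSumCount

variable {ι κ : Type*} [Fintype ι] [DecidableEq ι] [Fintype κ] [DecidableEq κ] (t : ℕ)

lemma mem_Icc_of_ne_zero {n : ℤ} (h : boundedSumCount ι t n ≠ 0) :
    n ∈ Icc (0 : ℤ) (Fintype.card ι * t) := by
  obtain ⟨x, hx⟩ := card_ne_zero.1 h
  rw [← (mem_filter.1 hx).2]
  exact sum_val_mem_Icc x

lemma congr (e : ι ≃ κ) (n : ℤ) : boundedSumCount ι t n = boundedSumCount κ t n := by
  refine card_equiv (e.arrowCongr (Equiv.refl _)) fun x ↦ ?_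
  simp only [mem_filter, mem_univ, true_and, Equiv.arrowCongr_apply, Equiv.refl_apply,
    Function.comp_apply]
  rw [e.symm.sum_comp (fun i ↦ (x i : ℤ))]

lemma card_mul_sub (n : ℤ) :
    boundedSumCount ι t (Fintype.card ι * t - n) = boundedSumCount ι t n := by
  refine card_equiv (Equiv.piCongrRight fun _ ↦ Fin.revPerm) fun x ↦ ?_
  have hrev (i : ι) : ((Fin.rev (x i) : ℕ) : ℤ) = t - x i := by
    rw [Fin.val_rev]; have := Fin.is_le (x i); omega
  simp only [mem_filter, mem_univ, true_and, Equiv.piCongrRight_apply, Pi.map_apply,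
    Fin.revPerm_apply, hrev, sum_sub_distrib, sum_const, card_univ, nsmul_eq_mul]
  constructor <;> intro h <;> linarith

lemma sum_type_eq_sum_mul (n : ℤ) :
    boundedSumCount (ι ⊕ κ) t n =
      ∑ j ∈ Icc 0 (Fintype.card ι * t : ℤ),
        boundedSumCount ι t j * boundedSumCount κ t (n - j) := by
  let pairs : Finset ((ι → Fin (t + 1)) × (κ → Fin (t + 1))) :=
    {p | ∑ i, (p.1 i : ℤ) + ∑ k, (p.2 k : ℤ) = n}
  have h_pairs : boundedSumCount (ι ⊕ κ) t n = #pairs := by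
    refine card_equiv (Equiv.sumArrowEquivProdArrow ι κ _) fun x ↦ ?_
    simp [pairs, Fintype.sum_sum_type]
  rw [h_pairs, card_eq_sum_card_fiberwise (f := fun p ↦ ∑ i, (p.1 i : ℤ))
    fun p _ ↦ sum_val_mem_Icc p.1]
  refine sum_congr rfl fun j _ ↦ ?_
  rw [boundedSumCount, boundedSumCount, ← card_product]
  congr 1
  ext p
  simp only [pairs, mem_filter, mem_univ, true_and, mem_product]
  constructor
  · rintro ⟨h, rfl⟩; exact ⟨rfl, by linarith⟩
  · rintro ⟨rfl, h⟩; exact ⟨by linarith, rfl⟩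

end boundedSumCount

lemma F_eq_boundedSumCount (a b : ℕ) (c : ℤ) (t : ℕ) :
    F a b c t = boundedSumCount (Fin (a + b)) t (b * t + c) :=
  rfl

lemma F_comm_neg (a b : ℕ) (c : ℤ) (t : ℕ) : F a b c t = F b a (-c) t := by
  rw [F_eq_boundedSumCount, F_eq_boundedSumCount,
    boundedSumCount.congr t (finCongr (add_comm b a)), ← boundedSumCount.card_mul_sub,
    Fintype.card_fin]
  congr 1
  push_cast
  ring

lemma mem_Icc_of_F_ne_zero {a b t : ℕ} {c : ℤ} (h : F a b c t ≠ 0) :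
    c ∈ Icc (-(b * t : ℤ)) (a * t) := by
  have := boundedSumCount.mem_Icc_of_ne_zero t h
  simp only [mem_Icc, Fintype.card_fin] at this ⊢
  push_cast at this
  constructor <;> linarith

lemma F_add_add_zero (a b c d t : ℕ) :
    F (a + c) (b + d) 0 t = ∑ j ∈ Icc (-(b * t : ℤ)) (a * t), F a b j t * F c d (-j) t := by
  let e : Fin (a + c + (b + d)) ≃ Fin (a + b) ⊕ Fin (c + d) :=
    (finCongr (by omega)).trans finSumFinEquiv.symm
  have h_shift : Icc (0 : ℤ) ((a + b : ℕ) * t) =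
      (Icc (-(b * t : ℤ)) (a * t)).map (addLeftEmbedding (b * t : ℤ)) := by
    rw [map_add_left_Icc]
    congr 1 <;> push_cast <;> ring
  rw [F_eq_boundedSumCount, boundedSumCount.congr t e, boundedSumCount.sum_type_eq_sum_mul,
    Fintype.card_fin, h_shift, sum_map]
  refine sum_congr rfl fun j _ ↦ ?_
  simp only [addLeftEmbedding_apply, F_eq_boundedSumCount]
  congr 2
  push_cast
  ring

lemma G_eq_sum_Icc (a b c d t : ℕ) :
    G a b c d t = ∑ j ∈ Icc (0 : ℤ) (a * t), F a b j t * F c d (-j) t := by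
  have h_range :
      G a b c d t = ∑ j ∈ Icc (0 : ℤ) (t * min a d : ℕ), F a b j t * F c d (-j) t := by
    rw [G, Int.Icc_eq_finset_map, sum_map, sub_zero, ← Nat.cast_add_one, Int.toNat_natCast]
    simp only [Function.Embedding.trans_apply, Nat.castEmbedding_apply, addLeftEmbedding_apply,
      zero_add]
  rw [h_range]
  refine sum_subset (Icc_subset_Icc le_rfl ?_) fun j hj hj' ↦ ?_
  · push_cast
    nlinarith [min_le_left (a : ℤ) d]
  · simp only [mem_Icc, not_and, not_le] at hj hj'
    have h_min : min (a * t : ℤ) (d * t) < j := by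
      rw [← min_mul_of_nonneg _ _ (by positivity), mul_comm]
      exact_mod_cast hj' hj.1
    refine mul_eq_zero_of_right _ (by_contra fun h ↦ ?_)
    have := (mem_Icc.1 (mem_Icc_of_F_ne_zero h)).1
    cases min_lt_iff.1 h_min <;> linarith

lemma G_swap_eq_sum_Icc (a b c d t : ℕ) :
    G b a d c t = ∑ j ∈ Icc (-(b * t : ℤ)) 0, F a b j t * F c d (-j) t := by
  rw [G_eq_sum_Icc]
  refine sum_nbij' (- ·) (- ·) (fun j hj ↦ by simp only [mem_Icc] at hj ⊢; omega)
    (fun j hj ↦ by simp only [mem_Icc] at hj ⊢; omega) (by simp) (by simp) fun j _ ↦ ?_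
  rw [F_comm_neg a b, F_comm_neg c d, neg_neg, mul_comm]

theorem stmt8_general (a b c d t : ℕ) :
    G a b c d t + G b a d c t = F (a + c) (b + d) 0 t + F a b 0 t * F c d 0 t := by
  have : 0 ≤ (a * t : ℤ) := by positivity
  have : 0 ≤ (b * t : ℤ) := by positivity
  have h_union : Icc (0 : ℤ) (a * t) ∪ Icc (-(b * t : ℤ)) 0 = Icc (-(b * t : ℤ)) (a * t) := by
    ext j; simp only [mem_union, mem_Icc]; constructor <;> intro h <;> omega
  have h_inter : Icc (0 : ℤ) (a * t) ∩ Icc (-(b * t : ℤ)) 0 = {0} := by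
    ext j; simp only [mem_inter, mem_Icc, mem_singleton]; constructor <;> intro h <;> omega
  rw [G_eq_sum_Icc, G_swap_eq_sum_Icc, ← sum_union_inter, h_union, h_inter, sum_singleton,
    F_add_add_zero, neg_zero]

theorem stmt8 (a b c d t : ℕ) (ht : 1 ≤ t) :
    G a b c d t + G b a d c t = F (a + c) (b + d) 0 t + F a b 0 t * F c d 0 t :=
  stmt8_general a b c d t
end

section
/- For integers n > k ≥ 2 and t ≥ 0, C(n-1,k-1) · ∑_{j=0}^{t} C(j+n-k-1, n-k-1)·C(k+j-1, j) = C(t+n-k, n-k) · ∑_{j=0}^{k-1} C(n-k+j-1, j)·C(t+j, j). -/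
open Finset

private lemma hockey (M K : ℕ) : ∑ j ∈ range (K+1), (M+j).choose j = (M+K+1).choose K := by
  induction K with
  | zero => simp
  | succ K ih =>
      rw [Finset.sum_range_succ, ih,
          show M+(K+1) = M+K+1 from by omega,
          Nat.choose_succ_succ' (M+K+1) K]

private lemma key (M K t : ℕ) :
    (t+M+1).choose M * (K+M+1).choose K * (t+K+1).choose (K+1)
      = (t+M+1).choose (M+1) * (K+M+1).choose (K+1) * (t+K+1).choose K := by
  have e1 : (t+M+1).choose (M+1) * (M+1) = (t+M+1).choose M * (t+1) := by
    rw [Nat.choose_succ_right_eq]; congr 1; omega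
  have e2 : (K+M+1).choose (K+1) * (K+1) = (K+M+1).choose K * (M+1) := by
    rw [Nat.choose_succ_right_eq]; congr 1; omega
  have e3 : (t+K+1).choose (K+1) * (K+1) = (t+K+1).choose K * (t+1) := by
    rw [Nat.choose_succ_right_eq]; congr 1; omega
  have hpos : 0 < (t+1)*(K+1) := by positivity
  apply Nat.eq_of_mul_eq_mul_right hpos
  calc (t+M+1).choose M * (K+M+1).choose K * (t+K+1).choose (K+1) * ((t+1)*(K+1))
      = (t+M+1).choose M * (K+M+1).choose K * ((t+K+1).choose (K+1) * (K+1)) * (t+1) := by ring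
    _ = (t+M+1).choose M * (K+M+1).choose K * ((t+K+1).choose K * (t+1)) * (t+1) := by rw [e3]
    _ = ((t+M+1).choose M * (t+1)) * (K+M+1).choose K * (t+K+1).choose K * (t+1) := by ring
    _ = ((t+M+1).choose (M+1) * (M+1)) * (K+M+1).choose K * (t+K+1).choose K * (t+1) := by rw [e1]
    _ = (t+M+1).choose (M+1) * ((K+M+1).choose K * (M+1)) * (t+K+1).choose K * (t+1) := by ring
    _ = (t+M+1).choose (M+1) * ((K+M+1).choose (K+1) * (K+1)) * (t+K+1).choose K * (t+1) := by rw [e2]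
    _ = (t+M+1).choose (M+1) * (K+M+1).choose (K+1) * (t+K+1).choose K * ((t+1)*(K+1)) := by ring

private lemma inner (M t K : ℕ) :
    (K+M+1).choose K * ((t+M+1).choose M * (t+K+1).choose K)
      = (t+M+1).choose (M+1) * ∑ i ∈ range K, (M+i+1).choose (i+1) * (t+i+1).choose i
        + (t+M+1).choose M * ∑ j ∈ range (K+1), (M+j).choose j * (t+j+1).choose j := by
  induction K with
  | zero => simp
  | succ K ih =>
      rw [Finset.sum_range_succ, Finset.sum_range_succ]
      have p1 : (K+1+M+1).choose (K+1) = (K+M+1).choose K + (K+M+1).choose (K+1) := by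
        rw [show K+1+M+1 = K+M+1+1 from by omega]
        exact Nat.choose_succ_succ' (K+M+1) K
      have p2 : (t+(K+1)+1).choose (K+1) = (t+K+1).choose K + (t+K+1).choose (K+1) := by
        rw [show t+(K+1)+1 = t+K+1+1 from by omega]
        exact Nat.choose_succ_succ' (t+K+1) K
      have hkey := key M K t
      rw [p1, p2, show M+(K+1) = M+K+1 from by omega]
      simp only [show K+M+1 = M+K+1 from by omega] at ih hkey ⊢
      nlinarith [ih, hkey]

private lemma sdiff (M t K : ℕ) :
    ∑ j ∈ range (K+1), (M+j).choose j * (t+j+1).choose j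
      = ∑ j ∈ range (K+1), (M+j).choose j * (t+j).choose j
        + ∑ i ∈ range K, (M+i+1).choose (i+1) * (t+i+1).choose i := by
  induction K with
  | zero => simp
  | succ K ih =>
      rw [Finset.sum_range_succ, ih,
          Finset.sum_range_succ (fun j => (M+j).choose j * (t+j).choose j) (K+1),
          Finset.sum_range_succ (fun i => (M+i+1).choose (i+1) * (t+i+1).choose i) K,
          show t+(K+1)+1 = t+K+1+1 from by omega,
          Nat.choose_succ_succ' (t+K+1) K,
          show t+(K+1) = t+K+1 from by omega]
      ring_nf
      ring

private lemma main (M K t : ℕ) :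
    (K+M+1).choose K * ∑ j ∈ range (t+1), (j+M).choose M * (K+j).choose j
      = (t+M+1).choose (M+1) * ∑ j ∈ range (K+1), (M+j).choose j * (t+j).choose j := by
  induction t with
  | zero =>
      simp only [Finset.sum_range_one, Nat.zero_add, Nat.add_zero, Nat.choose_self,
        Nat.choose_zero_right, mul_one, one_mul]
      rw [hockey, show M+K+1 = K+M+1 from by omega]
  | succ t ih =>
      rw [Finset.sum_range_succ]
      have hsym : (K+(t+1)).choose (t+1) = (t+K+1).choose K := by
        rw [show K+(t+1) = t+K+1 from by omega]
        have := Nat.choose_symm (n := t+K+1) (k := K) (by omega)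
        rwa [show t+K+1-K = t+1 from by omega] at this
      have p : (t+1+M+1).choose (M+1) = (t+M+1).choose M + (t+M+1).choose (M+1) := by
        rw [show t+1+M+1 = t+M+1+1 from by omega]
        exact Nat.choose_succ_succ' (t+M+1) M
      have hS : ∀ j : ℕ, t+1+j = t+j+1 := fun j => by omega
      rw [hsym, p]
      simp only [hS]
      have hin := inner M t K
      have hsd := sdiff M t K
      nlinarith [ih, hin, hsd]

theorem stmt11 (n k t : ℕ) (hk : 2 ≤ k) (hkn : k < n) :
    (n - 1).choose (k - 1) *
        ∑ j ∈ Finset.range (t + 1), (j + (n - k - 1)).choose (n - k - 1) * (k + j - 1).choose j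
      = (t + (n - k)).choose (n - k) *
        ∑ j ∈ Finset.range k, (n - k + j - 1).choose j * (t + j).choose j := by
  obtain ⟨K, rfl⟩ : ∃ K, k = K + 2 := ⟨k - 2, by omega⟩
  obtain ⟨M, rfl⟩ : ∃ M, n = K + 2 + (M + 1) := ⟨n - (K+2) - 1, by omega⟩
  simp only [show (K+2+(M+1)-1 : ℕ) = K+1+M+1 from by omega,
             show (K+2-1 : ℕ) = K+1 from by omega,
             show (K+2+(M+1)-(K+2) : ℕ) = M+1 from by omega,
             show (M+1-1 : ℕ) = M from by omega,
             show ∀ j:ℕ, K+2+j-1 = K+1+j from fun j => by omega,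
             show ∀ j:ℕ, M+1+j-1 = M+j from fun j => by omega,
             show (K+2 : ℕ) = K+1+1 from by omega]
  exact main M (K+1) t
end

section
/- For positive integers s, k and nonnegative integer t, C(s+k-1, s) · ∑_{j=0}^{t} C(j+s-1, s-1)·C(j+k-1, k-1) = C(t+s, s) · ∑_{j=0}^{k-1} C(j+s-1, s-1)·C(t+j, j). -/
open Finset Nat

private def Dd (s a b : ℕ) : ℕ :=
  (s + b - 1).choose s * ((a + s - 1).choose (s - 1) * (a + b - 1).choose (b - 1))

private lemma cchoose (n k m : ℕ) (h : k + m = n) :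
    (n.choose k : ℚ) = n ! / (k ! * m !) := by
  subst h
  rw [Nat.cast_choose ℚ (Nat.le_add_right k m), Nat.add_sub_cancel_left]

private lemma dswap_main (S A B : ℕ) :
    Dd (S+1) (A+1) (B+2) + Dd (S+1) (B+1) (A+1)
      = Dd (S+1) (B+1) (A+2) + Dd (S+1) (A+1) (B+1) := by
  have h1 : Dd (S+1) (A+1) (B+2)
      = (S+B+2).choose (S+1) * ((A+S+1).choose S * (A+B+2).choose (B+1)) := by
    unfold Dd; congr 1 <;> [skip; congr 1] <;> congr 1 <;> omega
  have h2 : Dd (S+1) (B+1) (A+1)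
      = (S+A+1).choose (S+1) * ((B+S+1).choose S * (A+B+1).choose A) := by
    unfold Dd; congr 1 <;> [skip; congr 1] <;> congr 1 <;> omega
  have h3 : Dd (S+1) (B+1) (A+2)
      = (S+A+2).choose (S+1) * ((B+S+1).choose S * (A+B+2).choose (A+1)) := by
    unfold Dd; congr 1 <;> [skip; congr 1] <;> congr 1 <;> omega
  have h4 : Dd (S+1) (A+1) (B+1)
      = (S+B+1).choose (S+1) * ((A+S+1).choose S * (A+B+1).choose B) := by
    unfold Dd; congr 1 <;> [skip; congr 1] <;> congr 1 <;> omega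
  rw [h1, h2, h3, h4]
  have key : ((S+B+2).choose (S+1) : ℚ) * ((A+S+1).choose S * (A+B+2).choose (B+1))
      + (S+A+1).choose (S+1) * ((B+S+1).choose S * (A+B+1).choose A)
      = (S+A+2).choose (S+1) * ((B+S+1).choose S * (A+B+2).choose (A+1))
      + (S+B+1).choose (S+1) * ((A+S+1).choose S * (A+B+1).choose B) := by
    rw [cchoose (S+B+2) (S+1) (B+1) (by omega), cchoose (A+S+1) S (A+1) (by omega),
        cchoose (A+B+2) (B+1) (A+1) (by omega), cchoose (S+A+1) (S+1) A (by omega),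
        cchoose (B+S+1) S (B+1) (by omega), cchoose (A+B+1) A (B+1) (by omega),
        cchoose (S+A+2) (S+1) (A+1) (by omega), cchoose (A+B+2) (A+1) (B+1) (by omega),
        cchoose (S+B+1) (S+1) B (by omega), cchoose (A+B+1) B (A+1) (by omega)]
    have f1 : ((S+B+2)! : ℚ) = (S+B+2) * (S+B+1)! := by
      rw [show S+B+2 = (S+B+1)+1 from rfl, Nat.factorial_succ]; push_cast; ring
    have f2 : ((A+B+2)! : ℚ) = (A+B+2) * (A+B+1)! := by
      rw [show A+B+2 = (A+B+1)+1 from rfl, Nat.factorial_succ]; push_cast; ring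
    have f3 : ((S+A+2)! : ℚ) = (S+A+2) * (S+A+1)! := by
      rw [show S+A+2 = (S+A+1)+1 from rfl, Nat.factorial_succ]; push_cast; ring
    have g1 : ((S+1)! : ℚ) = (S+1) * S ! := by
      rw [Nat.factorial_succ]; push_cast; ring
    have g2 : ((A+1)! : ℚ) = (A+1) * A ! := by
      rw [Nat.factorial_succ]; push_cast; ring
    have g3 : ((B+1)! : ℚ) = (B+1) * B ! := by
      rw [Nat.factorial_succ]; push_cast; ring
    have hAS : ((A+S+1)! : ℚ) = ((S+A+1)! : ℚ) := by rw [show A+S+1 = S+A+1 from by omega]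
    have hBS : ((B+S+1)! : ℚ) = ((S+B+1)! : ℚ) := by rw [show B+S+1 = S+B+1 from by omega]
    rw [f1, f2, f3, g1, g2, g3, hAS, hBS]
    have p1 : ((S+A+1)! : ℚ) ≠ 0 := by positivity
    have p2 : ((S+B+1)! : ℚ) ≠ 0 := by positivity
    have p3 : ((A+B+1)! : ℚ) ≠ 0 := by positivity
    have p4 : (S ! : ℚ) ≠ 0 := by positivity
    have p5 : (A ! : ℚ) ≠ 0 := by positivity
    have p6 : (B ! : ℚ) ≠ 0 := by positivity
    field_simp
    ring
  exact_mod_cast key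

private def Gg (s a b : ℕ) : ℕ :=
  (s + b - 1).choose s * ∑ j ∈ Finset.range a, (j + s - 1).choose (s - 1) * (j + b - 1).choose (b - 1)

private lemma gstep (s a b : ℕ) : Gg s (a+1) b = Gg s a b + Dd s a b := by
  unfold Gg Dd
  rw [Finset.sum_range_succ, mul_add]

private lemma dzero (S a : ℕ) : Dd (S+1) a 0 = 0 := by
  unfold Dd
  simp [show S+1+0-1 = S from by omega, Nat.choose_succ_self]

private lemma dswap (S a b : ℕ) :
    Dd (S+1) a (b+1) + Dd (S+1) b a = Dd (S+1) b (a+1) + Dd (S+1) a b := by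
  match a, b with
  | 0, 0 => rfl
  | 0, (B+1) =>
    have h1 : Dd (S+1) 0 (B+2) = (S+B+2).choose (S+1) := by
      unfold Dd
      rw [show S+1+(B+2)-1 = S+B+2 from by omega, show 0+(S+1)-1 = S from by omega,
          show S+1-1 = S from by omega, show 0+(B+2)-1 = B+1 from by omega,
          show B+2-1 = B+1 from by omega, Nat.choose_self, Nat.choose_self]
      ring
    have h2 : Dd (S+1) (B+1) 0 = 0 := dzero S (B+1)
    have h3 : Dd (S+1) (B+1) 1 = (S+B+1).choose S := by
      unfold Dd
      rw [show S+1+1-1 = S+1 from by omega, show B+1+(S+1)-1 = S+B+1 from by omega,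
          show S+1-1 = S from by omega, show B+1+1-1 = B+1 from by omega,
          show 1-1 = 0 from rfl, Nat.choose_self, Nat.choose_zero_right]
      ring
    have h4 : Dd (S+1) 0 (B+1) = (S+B+1).choose (S+1) := by
      unfold Dd
      rw [show S+1+(B+1)-1 = S+B+1 from by omega, show 0+(S+1)-1 = S from by omega,
          show S+1-1 = S from by omega, show 0+(B+1)-1 = B from by omega,
          show B+1-1 = B from by omega, Nat.choose_self, Nat.choose_self]
      ring
    rw [h1, h2, h3, h4, show S+B+2 = (S+B+1)+1 from rfl, Nat.choose_succ_succ' (S+B+1) S]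
    omega
  | (A+1), 0 =>
    have h1 : Dd (S+1) (A+1) 1 = (S+A+1).choose S := by
      unfold Dd
      rw [show S+1+1-1 = S+1 from by omega, show A+1+(S+1)-1 = S+A+1 from by omega,
          show S+1-1 = S from by omega, show A+1+1-1 = A+1 from by omega,
          show 1-1 = 0 from rfl, Nat.choose_self, Nat.choose_zero_right]
      ring
    have h2 : Dd (S+1) 0 (A+1) = (S+A+1).choose (S+1) := by
      unfold Dd
      rw [show S+1+(A+1)-1 = S+A+1 from by omega, show 0+(S+1)-1 = S from by omega,
          show S+1-1 = S from by omega, show 0+(A+1)-1 = A from by omega,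
          show A+1-1 = A from by omega, Nat.choose_self, Nat.choose_self]
      ring
    have h3 : Dd (S+1) 0 (A+2) = (S+A+2).choose (S+1) := by
      unfold Dd
      rw [show S+1+(A+2)-1 = S+A+2 from by omega, show 0+(S+1)-1 = S from by omega,
          show S+1-1 = S from by omega, show 0+(A+2)-1 = A+1 from by omega,
          show A+2-1 = A+1 from by omega, Nat.choose_self, Nat.choose_self]
      ring
    rw [h1, h2, h3, dzero, show S+A+2 = (S+A+1)+1 from rfl, Nat.choose_succ_succ' (S+A+1) S]
    omega
  | (A+1), (B+1) => exact dswap_main S A B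

private lemma gzero (S b : ℕ) : Gg (S+1) 0 b = 0 ∧ Gg (S+1) b 0 = 0 := by
  constructor
  · unfold Gg; simp
  · unfold Gg
    rw [show S+1+0-1 = S from by omega, Nat.choose_succ_self, zero_mul]

private lemma gsymm (S : ℕ) : ∀ n a b, a + b ≤ n → Gg (S+1) a b = Gg (S+1) b a := by
  intro n
  induction n with
  | zero =>
    intro a b h
    have : a = 0 ∧ b = 0 := by omega
    rw [this.1, this.2]
  | succ n ih =>
    intro a b h
    match a, b with
    | 0, b => rw [(gzero S b).1, (gzero S b).2]
    | (a+1), 0 => rw [(gzero S (a+1)).1, (gzero S (a+1)).2]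
    | (A+1), (B+1) =>
      have l : Gg (S+1) (A+1) (B+1) = Gg (S+1) A B + (Dd (S+1) B A + Dd (S+1) A (B+1)) := by
        rw [gstep, ih A (B+1) (by omega), gstep, ih B A (by omega)]; ring
      have r : Gg (S+1) (B+1) (A+1) = Gg (S+1) A B + (Dd (S+1) A B + Dd (S+1) B (A+1)) := by
        rw [gstep, ih B (A+1) (by omega), gstep, ih A B (by omega)]; ring
      rw [l, r]
      have := dswap S A B
      omega

theorem stmt12 (s k t : ℕ) (hs : 1 ≤ s) (hk : 1 ≤ k) :
    (s + k - 1).choose s *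
        ∑ j ∈ Finset.range (t + 1), (j + s - 1).choose (s - 1) * (j + k - 1).choose (k - 1)
      = (t + s).choose s *
        ∑ j ∈ Finset.range k, (j + s - 1).choose (s - 1) * (t + j).choose j := by
  obtain ⟨S, rfl⟩ : ∃ S, s = S + 1 := ⟨s - 1, by omega⟩
  have h := gsymm S (t + 1 + k) (t + 1) k le_rfl
  unfold Gg at h
  rw [h, show S + 1 + (t + 1) - 1 = t + (S + 1) from by omega]
  congr 1
  apply Finset.sum_congr rfl
  intro j _
  congr 1
  rw [show j + (t + 1) - 1 = j + t from by omega, show t + 1 - 1 = t from by omega,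
      ← Nat.choose_symm (Nat.le_add_left t j), Nat.add_sub_cancel, Nat.add_comm t j]
end

section
/- For integers n > k ≥ 2 and t ≥ 0, ∑_{j=0}^{t} F(1,k-1,j,t)·F(n-k-1,1,-j,t) = ∑_{j=0}^{t} C(j+n-k-1, n-k-1)·C(k+j-1, j), where F is the bounded-coordinate solution count. -/
lemma key_count (M : ℕ) (f : Fin M → ℕ) (a : Fin M) :
    Multiset.count a (∑ i : Fin M, Multiset.replicate (f i) i) = f a := by
  rw [Multiset.count_sum']
  simp [Multiset.count_replicate]

lemma count_tuples (m s t : ℕ) (hst : s ≤ t) :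
    (Finset.univ.filter
      (fun x : Fin (m + 1) → Fin (t + 1) => ∑ i, (x i : ℤ) = (s : ℤ))).card
      = (s + m).choose m := by
  have hcard : (Finset.univ.filter
      (fun x : Fin (m + 1) → Fin (t + 1) => ∑ i, (x i : ℤ) = (s : ℤ))).card
      = (Finset.univ : Finset (Sym (Fin (m + 1)) s)).card := by
    refine Finset.card_bij'
      (fun x _ => ⟨∑ i : Fin (m + 1), Multiset.replicate (x i : ℕ) i, ?_⟩)
      (fun σ _ => fun i => ⟨Multiset.count i σ.1, ?_⟩) ?_ ?_ ?_ ?_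
    · rename_i hx
      simp only [Finset.mem_filter, Finset.mem_univ, true_and] at hx
      have : ∑ i : Fin (m + 1), (x i : ℕ) = s := by exact_mod_cast hx
      simp [this]
    · rename_i i
      have h1 : Multiset.count i σ.1 ≤ s := by
        have := Multiset.count_le_card i σ.1
        rwa [σ.2] at this
      omega
    · intro x hx
      exact Finset.mem_univ _
    · intro σ _
      simp only [Finset.mem_filter, Finset.mem_univ, true_and]
      have h2 : ∑ i : Fin (m + 1), Multiset.count i σ.1 = s := by
        have := Multiset.toFinset_sum_count_eq σ.1
        rw [σ.2] at this
        refine Eq.trans ?_ this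
        refine (Finset.sum_subset (Finset.subset_univ _) ?_).symm
        intro i _ hi
        simpa using hi
      exact_mod_cast congrArg (Nat.cast (R := ℤ)) h2
    · intro x hx
      funext i
      apply Fin.ext
      simp [key_count]
    · intro σ _
      apply Subtype.ext
      simp only
      ext a
      rw [key_count]
  rw [hcard, Finset.card_univ]
  rw [Sym.card_sym_eq_choose]
  simp only [Fintype.card_fin]
  clear hcard
  have h3 : Nat.choose (m + 1 + s - 1) s = Nat.choose (s + m) s := by
    congr 1
    omega
  rw [h3]
  exact Nat.choose_symm_add

lemma count_tuples' (M s t : ℕ) (hM : 1 ≤ M) (hst : s ≤ t) :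
    (Finset.univ.filter
      (fun x : Fin M → Fin (t + 1) => ∑ i, (x i : ℤ) = (s : ℤ))).card
      = (s + (M - 1)).choose (M - 1) := by
  obtain ⟨m, rfl⟩ : ∃ m, M = m + 1 := ⟨M - 1, by omega⟩
  simpa using count_tuples m s t hst

lemma rev_card (M t : ℕ) (c c' : ℤ) (h : c + c' = M * t) :
    (Finset.univ.filter
      (fun x : Fin M → Fin (t + 1) => ∑ i, (x i : ℤ) = c)).card
      = (Finset.univ.filter
      (fun x : Fin M → Fin (t + 1) => ∑ i, (x i : ℤ) = c')).card := by
  have hrev : ∀ (x : Fin M → Fin (t + 1)) (hx : ∑ i, (x i : ℤ) = c),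
      ∑ i, (((x i).rev : Fin (t + 1)) : ℤ) = c' := by
    intro x hx
    have : ∀ i, (((x i).rev : Fin (t + 1)) : ℤ) = (t : ℤ) - (x i : ℤ) := by
      intro i
      rw [Fin.val_rev]
      have hle : (x i : ℕ) ≤ t := Fin.is_le _
      push_cast [Nat.succ_sub_one, hle]
      ring
    rw [Finset.sum_congr rfl (fun i _ => this i), Finset.sum_sub_distrib,
      Finset.sum_const, hx]
    simp only [Finset.card_univ, Fintype.card_fin, nsmul_eq_mul]
    linarith [h]
  have hrev' : ∀ (x : Fin M → Fin (t + 1)) (hx : ∑ i, (x i : ℤ) = c'),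
      ∑ i, (((x i).rev : Fin (t + 1)) : ℤ) = c := by
    intro x hx
    have : ∀ i, (((x i).rev : Fin (t + 1)) : ℤ) = (t : ℤ) - (x i : ℤ) := by
      intro i
      rw [Fin.val_rev]
      have hle : (x i : ℕ) ≤ t := Fin.is_le _
      push_cast [Nat.succ_sub_one, hle]
      ring
    rw [Finset.sum_congr rfl (fun i _ => this i), Finset.sum_sub_distrib,
      Finset.sum_const, hx]
    simp only [Finset.card_univ, Fintype.card_fin, nsmul_eq_mul]
    linarith [h]
  refine Finset.card_bij' (fun x _ => fun i => (x i).rev)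
    (fun x _ => fun i => (x i).rev) ?_ ?_ ?_ ?_
  · intro x hx
    simp only [Finset.mem_filter, Finset.mem_univ, true_and] at hx ⊢
    exact hrev x hx
  · intro x hx
    simp only [Finset.mem_filter, Finset.mem_univ, true_and] at hx ⊢
    exact hrev' x hx
  · intro x hx
    funext i
    exact Fin.rev_rev _
  · intro x hx
    funext i
    exact Fin.rev_rev _

theorem stmt14 (n k t : ℕ) (hk : 2 ≤ k) (hkn : k < n) :
    ∑ j ∈ Finset.range (t + 1), F 1 (k - 1) (j : ℤ) t * F (n - k - 1) 1 (-(j : ℤ)) t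
      = ∑ j ∈ Finset.range (t + 1),
          (j + (n - k - 1)).choose (n - k - 1) * (k + j - 1).choose j := by
  have hF1 : ∀ j ≤ t, F 1 (k - 1) (j : ℤ) t = (t - j + (k - 1)).choose (k - 1) := by
    intro j hj
    unfold F
    have h2 : (1 : ℕ) ≤ k := by omega
    have hc : (((k - 1 : ℕ) : ℤ) * t + (j : ℤ)) + ((t - j : ℕ) : ℤ)
        = ((1 + (k - 1) : ℕ) : ℤ) * t := by
      push_cast [Nat.cast_sub h2, Nat.cast_sub hj]
      ring
    rw [rev_card (1 + (k - 1)) t _ _ hc]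
    have h1 : 1 ≤ 1 + (k - 1) := by omega
    have := count_tuples' (1 + (k - 1)) (t - j) t h1 (by omega)
    rw [this]
    clear this hc
    congr 1 <;> omega
  have hF2 : ∀ j ≤ t, F (n - k - 1) 1 (-(j : ℤ)) t
      = (t - j + (n - k - 1)).choose (n - k - 1) := by
    intro j hj
    unfold F
    have hpred : (fun x : Fin (n - k - 1 + 1) → Fin (t + 1) =>
        ∑ i, (x i : ℤ) = (1 : ℕ) * t + (-(j : ℤ)))
        = (fun x : Fin (n - k - 1 + 1) → Fin (t + 1) =>
        ∑ i, (x i : ℤ) = ((t - j : ℕ) : ℤ)) := by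
      funext x
      have : ((1 : ℕ) : ℤ) * t + (-(j : ℤ)) = ((t - j : ℕ) : ℤ) := by
        push_cast [Nat.cast_sub hj]
        ring
      rw [this]
    rw [show (Finset.univ.filter (fun x : Fin (n - k - 1 + 1) → Fin (t + 1) =>
        ∑ i, (x i : ℤ) = ((1 : ℕ) : ℤ) * t + (-(j : ℤ))))
        = (Finset.univ.filter (fun x : Fin (n - k - 1 + 1) → Fin (t + 1) =>
        ∑ i, (x i : ℤ) = ((t - j : ℕ) : ℤ))) from by
      apply Finset.filter_congr
      intro x _
      rw [funext_iff] at hpred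
      rw [hpred x]]
    exact count_tuples (n - k - 1) (t - j) t (by omega)
  rw [Finset.sum_congr rfl (fun j hj => by
    rw [hF1 j (by simpa using Finset.mem_range_succ_iff.mp hj),
        hF2 j (by simpa using Finset.mem_range_succ_iff.mp hj)])]
  have hrefl := Finset.sum_range_reflect
    (fun j => (j + (k - 1)).choose (k - 1) * (j + (n - k - 1)).choose (n - k - 1)) (t + 1)
  simp only [Nat.add_sub_cancel] at hrefl
  rw [hrefl]
  refine Finset.sum_congr rfl fun j hj => ?_
  have h1 : k + j - 1 = j + (k - 1) := by omega
  rw [h1, Nat.choose_symm_add]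
  ring
end

section
/- For integers n ≥ 2, k with 2 ≤ k ≤ n-1, and m ≥ 1, the coefficient of t^m in the Ehrhart polynomial of the uniform matroid U_{2,n} is (1/(n-1)!)·(2^m·[n, m+1] − n·[n-1, m]), where [n,k] is the unsigned Stirling number of the first kind. Equivalently, ∑_{i=0}^{1}(-1)^i C(n,i) C((2-i)t - i + n - 1, n-1) = (1/(n-1)!)·∑_{m≥0}(2^m [n,m+1] − n[n-1,m]) t^m as polynomials in t. -/
/-!
`Equiv.Perm.decomposeFin` builds a permutation of `Fin (n + 1)` from `p : Fin (n + 1)` and a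
permutation of `Fin n`, inserting the new point `0` as a fixed point when `p = 0` and into the
cycle of `p` otherwise. So the cycle count goes up by one exactly when `p = 0`, and `stirling`
satisfies the recursion of `Nat.stirlingFirst`. The recursion gives
`∑ₘ [n, m+1] xᵐ = (x+1)(x+2)⋯(x+n-1)` and `∑ₘ [n-1, m] xᵐ = x(x+1)⋯(x+n-2)`; at `x = 2t` and
`x = t` these rising factorials are `(n-1)!` times `C(2t+n-1, n-1)` and `C(t+n-2, n-1)`.
-/

/-- Unsigned Stirling number of the first kind: the number of permutations of an
n-element set with exactly k cycles (counting fixed points as cycles). -/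
noncomputable def stirling (n k : ℕ) : ℕ :=
  Nat.card {σ : Equiv.Perm (Fin n) // (n - σ.cycleType.sum) + σ.cycleType.card = k}

open Finset

namespace Equiv.Perm

variable {α β : Type*}

noncomputable def numCycles (σ : Perm α) : ℕ := Nat.card (Quotient (SameCycle.setoid σ))

theorem SameCycle.map_of_sameCycle_apply [Finite α] {σ : Perm α} {τ : Perm β} {f : α → β}
    (hf : ∀ z, τ.SameCycle (f z) (f (σ z))) {z w : α} (h : σ.SameCycle z w) :
    τ.SameCycle (f z) (f w) := by
  obtain ⟨i, rfl⟩ := h.exists_nat_pow_eq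
  clear h
  induction i with
  | zero => exact SameCycle.refl _ _
  | succ i ih => exact ih.trans (by rw [pow_succ', mul_apply]; exact hf _)

/-- Fixed points are the singleton classes, the other classes are the supports of the cycle
factors. -/
theorem numCycles_eq [Fintype α] [DecidableEq α] (σ : Perm α) :
    σ.numCycles = (Fintype.card α - σ.cycleType.sum) + σ.cycleType.card := by
  let f : α → Function.fixedPoints σ ⊕ σ.cycleFactorsFinset := fun x =>
    if hx : σ x = x then .inl ⟨x, hx⟩
    else .inr ⟨σ.cycleOf x, cycleOf_mem_cycleFactorsFinset_iff.mpr (mem_support.mpr hx)⟩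
  have hker : SameCycle.setoid σ = Setoid.ker f := by
    ext x y
    change σ.SameCycle x y ↔ f x = f y
    by_cases hx : σ x = x <;> by_cases hy : σ y = y <;>
      simp only [f, hx, hy, dite_true, dite_false]
    · simp only [Sum.inl.injEq, Subtype.ext_iff]
      exact ⟨fun h => h.eq_of_left hx, fun h => h ▸ SameCycle.refl _ _⟩
    · simp only [reduceCtorEq, iff_false]
      exact fun h => hy (h.eq_of_left hx ▸ hx)
    · simp only [reduceCtorEq, iff_false]
      exact fun h => hx (h.symm.eq_of_left hy ▸ hy)
    · simp only [Sum.inr.injEq, Subtype.mk.injEq]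
      exact sameCycle_iff_cycleOf_eq_of_mem_support (mem_support.2 hx) (mem_support.2 hy)
  have hf : Function.Surjective f := by
    rintro (⟨x, hx⟩ | ⟨c, hc⟩)
    · exact ⟨x, by simp [f, show σ x = x from hx]⟩
    · obtain ⟨a, ha⟩ := (mem_cycleFactorsFinset_iff.mp hc).1.nonempty_support
      have hσa : σ a ≠ a := by
        rw [← (mem_cycleFactorsFinset_iff.mp hc).2 a ha]; exact mem_support.mp ha
      exact ⟨a, by simp [f, hσa, cycle_is_cycleOf ha hc]⟩
  rw [numCycles, hker, Nat.card_congr (Setoid.quotientKerEquivOfSurjective f hf), Nat.card_sum,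
    Nat.card_eq_fintype_card, card_fixedPoints, Nat.card_eq_fintype_card, Fintype.card_coe,
    cycleType_def, Multiset.card_map]
  rfl

section DecomposeFin

variable {n : ℕ} (p : Fin (n + 1)) (e : Perm (Fin n))

theorem sameCycle_decomposeFin_symm_succ_iff {x y : Fin n} :
    (decomposeFin.symm (p, e)).SameCycle x.succ y.succ ↔ e.SameCycle x y := by
  have hp : ∀ q : Fin (n + 1), ∃ d, (Fin.cons d id : Fin (n + 1) → Fin n) q = d := fun q => by
    cases q using Fin.cases with
    | zero => exact ⟨x, rfl⟩
    | succ b => exact ⟨b, rfl⟩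
  set σ := decomposeFin.symm (p, e)
  constructor
  · -- `Fin.cons d id` sends `0` where it sends `p = σ 0`, so it maps every `σ`-step to an
    -- `e`-step or to no step at all.
    obtain ⟨d, hd⟩ := hp p
    have hσ : ∀ w : Fin n, (Fin.cons d id : Fin (n + 1) → Fin n) (σ w.succ) = e w := fun w => by
      by_cases h : (e w).succ = p
      · rw [← h, Fin.cons_succ, id] at hd
        simp [σ, ← h, hd]
      · simp [σ, swap_apply_of_ne_of_ne (Fin.succ_ne_zero _) h]
    refine SameCycle.map_of_sameCycle_apply (f := (Fin.cons d id : Fin (n + 1) → Fin n))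
      fun z => ?_
    refine Fin.cases ?_ (fun w => ?_) z
    · simpa [σ, hd] using SameCycle.refl e d
    · rw [hσ]; exact ⟨1, rfl⟩
  · refine SameCycle.map_of_sameCycle_apply (fun z => ?_)
    by_cases h : (e z).succ = p
    · have : σ (σ z.succ) = (e z).succ := by simp [σ, h]
      rw [← this]
      exact sameCycle_apply_right.2 (sameCycle_apply_right.2 (SameCycle.refl _ _))
    · have : σ z.succ = (e z).succ := by
        simp [σ, swap_apply_of_ne_of_ne (Fin.succ_ne_zero _) h]
      rw [← this]
      exact sameCycle_apply_right.2 (SameCycle.refl _ _)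

theorem numCycles_decomposeFin_symm :
    (decomposeFin.symm (p, e)).numCycles = e.numCycles + if p = 0 then 1 else 0 := by
  set σ := decomposeFin.symm (p, e)
  let φ : Quotient (SameCycle.setoid e) → Quotient (SameCycle.setoid σ) :=
    Quotient.map Fin.succ fun _ _ => (sameCycle_decomposeFin_symm_succ_iff p e).2
  have hφ : Function.Injective φ := by
    rintro ⟨x⟩ ⟨y⟩ h
    exact Quotient.sound ((sameCycle_decomposeFin_symm_succ_iff p e).1 (Quotient.exact h))
  by_cases hp : p = 0
  · have h0 (y : Fin n) : ¬σ.SameCycle 0 y.succ := fun h =>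
      Fin.succ_ne_zero y (h.eq_of_left (by simp [Function.IsFixedPt, σ, hp])).symm
    let ψ : Option (Quotient (SameCycle.setoid e)) → Quotient (SameCycle.setoid σ) :=
      fun o => o.elim ⟦0⟧ φ
    have hψ : Function.Bijective ψ := by
      refine ⟨?_, ?_⟩
      · rintro (_ | ⟨⟨x⟩⟩) (_ | ⟨⟨y⟩⟩) h
        · rfl
        · exact (h0 y (Quotient.exact h)).elim
        · exact (h0 x (Quotient.exact h.symm)).elim
        · exact congrArg some (hφ h)
      · rintro ⟨z⟩
        cases z using Fin.cases with
        | zero => exact ⟨none, rfl⟩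
        | succ w => exact ⟨some ⟦w⟧, rfl⟩
    rw [numCycles, ← Nat.card_congr (Equiv.ofBijective ψ hψ), Finite.card_option, if_pos hp]
    rfl
  · obtain ⟨b, rfl⟩ := Fin.exists_succ_eq.2 hp
    have hφ' : Function.Surjective φ := by
      rintro ⟨z⟩
      cases z using Fin.cases with
      | zero => exact ⟨⟦b⟧, Quotient.sound (SameCycle.symm ⟨1, by simp [σ]⟩)⟩
      | succ w => exact ⟨⟦w⟧, rfl⟩
    rw [numCycles, ← Nat.card_congr (Equiv.ofBijective φ ⟨hφ, hφ'⟩), if_neg hp, add_zero]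
    rfl

end DecomposeFin

end Equiv.Perm

open Equiv Equiv.Perm

theorem card_filter_numCycles_succ (n k : ℕ) :
    #{σ : Perm (Fin (n + 1)) | σ.numCycles = k + 1}
      = n * #{e : Perm (Fin n) | e.numCycles = k + 1} + #{e : Perm (Fin n) | e.numCycles = k} := by
  rw [univ_perm_fin_succ, filter_map, card_map, card_filter, Fintype.sum_prod_type,
    Fin.sum_univ_succ]
  simp only [Function.comp_apply, Equiv.coe_toEmbedding, numCycles_decomposeFin_symm, if_pos,
    if_neg (Fin.succ_ne_zero _), add_zero, Nat.add_right_cancel_iff, sum_const, card_univ,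
    Fintype.card_fin, smul_eq_mul]
  rw [card_filter, card_filter, add_comm]

theorem stirling_eq_card_filter_numCycles (n k : ℕ) :
    stirling n k = #{σ : Perm (Fin n) | σ.numCycles = k} := by
  simp only [stirling, numCycles_eq, Fintype.card_fin, Nat.card_eq_fintype_card,
    Fintype.card_subtype]

theorem stirling_eq_stirlingFirst (n k : ℕ) : stirling n k = Nat.stirlingFirst n k := by
  induction n generalizing k with
  | zero =>
    have h0 (σ : Perm (Fin 0)) : σ.numCycles = 0 := Nat.card_of_isEmpty
    cases k <;> simp [stirling_eq_card_filter_numCycles, h0]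
  | succ n ih =>
    cases k with
    | zero =>
      rw [stirling_eq_card_filter_numCycles, Nat.stirlingFirst_succ_zero, card_eq_zero,
        filter_eq_empty_iff]
      exact fun σ _ => (Nat.card_pos (α := Quotient (SameCycle.setoid σ))).ne'
    | succ k =>
      rw [stirling_eq_card_filter_numCycles, card_filter_numCycles_succ,
        ← stirling_eq_card_filter_numCycles, ← stirling_eq_card_filter_numCycles, ih, ih,
        Nat.stirlingFirst_succ_succ]

open Polynomial

theorem Nat.sum_range_stirlingFirst_succ_succ_mul_pow {R : Type*} [CommSemiring R] (n : ℕ)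
    (x : R) :
    ∑ m ∈ range (n + 1), (stirlingFirst (n + 1) (m + 1) : R) * x ^ m
      = (ascPochhammer R n).eval (x + 1) := by
  induction n with
  | zero => simp [stirlingFirst_self]
  | succ n ih =>
    have hshift : ∑ m ∈ range (n + 2), (stirlingFirst (n + 1) m : R) * x ^ m
        = x * ∑ m ∈ range (n + 1), (stirlingFirst (n + 1) (m + 1) : R) * x ^ m := by
      rw [sum_range_succ', mul_sum]
      simp only [stirlingFirst_succ_zero, Nat.cast_zero, zero_mul, add_zero, pow_succ]
      exact sum_congr rfl fun m _ => by ring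
    have htop : ∑ m ∈ range (n + 2), (stirlingFirst (n + 1) (m + 1) : R) * x ^ m
        = ∑ m ∈ range (n + 1), (stirlingFirst (n + 1) (m + 1) : R) * x ^ m := by
      rw [sum_range_succ, stirlingFirst_eq_zero_of_lt (by omega), Nat.cast_zero, zero_mul,
        add_zero]
    have hrec : ∀ m, (stirlingFirst (n + 2) (m + 1) : R) * x ^ m
        = (n + 1) * ((stirlingFirst (n + 1) (m + 1) : R) * x ^ m)
          + (stirlingFirst (n + 1) m : R) * x ^ m := fun m => by
      rw [stirlingFirst_succ_succ]; push_cast; ring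
    rw [sum_congr rfl fun m _ => hrec m, sum_add_distrib, ← mul_sum, htop, hshift, ih,
      ascPochhammer_succ_eval]
    ring

theorem Nat.sum_range_stirlingFirst_mul_pow {R : Type*} [CommSemiring R] (n : ℕ) (x : R) :
    ∑ k ∈ range (n + 1), (stirlingFirst n k : R) * x ^ k = (ascPochhammer R n).eval x := by
  cases n with
  | zero => simp
  | succ n =>
    rw [sum_range_succ', stirlingFirst_succ_zero, Nat.cast_zero, zero_mul, add_zero,
      ascPochhammer_succ_left, eval_mul, eval_comp, eval_X, eval_add, eval_X, eval_one,
      ← sum_range_stirlingFirst_succ_succ_mul_pow, mul_sum]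
    exact sum_congr rfl fun m _ => by ring

theorem stmt18_general (n : ℕ) (hn : 2 ≤ n) (t : ℕ) :
    ((2 * t + n - 1).choose (n - 1) : ℚ) - n * ((t + n - 2).choose (n - 1) : ℚ)
      = (1 / (n - 1).factorial) *
          ∑ m ∈ Finset.range n,
            ((2 : ℚ) ^ m * stirling n (m + 1) - n * stirling (n - 1) m) * (t : ℚ) ^ m := by
  obtain ⟨q, rfl⟩ : ∃ q, n = q + 1 := ⟨n - 1, by omega⟩
  have hA : ∑ m ∈ range (q + 1), (2 : ℚ) ^ m * stirling (q + 1) (m + 1) * (t : ℚ) ^ m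
      = q.factorial * (2 * t + q).choose q := by
    simp_rw [stirling_eq_stirlingFirst, mul_comm ((2 : ℚ) ^ _), mul_assoc, ← mul_pow,
      Nat.sum_range_stirlingFirst_succ_succ_mul_pow]
    rw [← Nat.cast_mul, ← Nat.ascFactorial_eq_factorial_mul_choose,
      ← ascPochhammer_nat_eq_natCast_ascFactorial]
    norm_cast
  have hB : ∑ m ∈ range (q + 1), (stirling q m : ℚ) * (t : ℚ) ^ m
      = q.factorial * (t + q - 1).choose q := by
    rw [← Nat.cast_mul, ← Nat.ascFactorial_eq_factorial_mul_choose',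
      ← ascPochhammer_nat_eq_natCast_ascFactorial, ← Nat.sum_range_stirlingFirst_mul_pow]
    simp_rw [stirling_eq_stirlingFirst]
  rw [show 2 * t + (q + 1) - 1 = 2 * t + q by omega, show t + (q + 1) - 2 = t + q - 1 by omega,
    Nat.add_sub_cancel]
  simp_rw [sub_mul, sum_sub_distrib, mul_assoc ((q + 1 : ℕ) : ℚ), ← mul_sum, hA, hB]
  field_simp

theorem stmt18 (n k : ℕ) (hn : 2 ≤ n) (hk : 2 ≤ k) (hkn : k ≤ n - 1) (t : ℕ) :
    ((2 * t + n - 1).choose (n - 1) : ℚ) - n * ((t + n - 2).choose (n - 1) : ℚ)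
      = (1 / (n - 1).factorial) *
          ∑ m ∈ Finset.range n,
            ((2 : ℚ) ^ m * stirling n (m + 1) - n * stirling (n - 1) m) * (t : ℚ) ^ m :=
  stmt18_general n hn t
end

section
/- For positive integers a, b and t ≥ 0, the identity i((a,b,a,b),t) = (F(2a,2b,0,t) + F(a,b,0,t)^2)/2 holds, where i((a,b,a,b),t) = ∑_{j=0}^{t·min(a,b)} F(a,b,j,t)·F(a,b,-j,t); equivalently, 2·∑_{j=0}^{t·min(a,b)} F(a,b,j,t)·F(a,b,-j,t) = F(2a,2b,0,t) + F(a,b,0,t)^2. -/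
lemma Fsum_nonneg (a b t : ℕ) (x : Fin (a + b) → Fin (t + 1)) :
    0 ≤ ∑ i, (x i : ℤ) :=
  Finset.sum_nonneg fun i _ => by positivity

lemma Fsum_le (a b t : ℕ) (x : Fin (a + b) → Fin (t + 1)) :
    ∑ i, (x i : ℤ) ≤ (a + b : ℕ) * t := by
  calc ∑ i, (x i : ℤ) ≤ ∑ _i : Fin (a + b), (t : ℤ) := by
        apply Finset.sum_le_sum
        intro i _
        exact_mod_cast Nat.lt_succ_iff.mp (x i).isLt
    _ = (a + b : ℕ) * t := by simp [Finset.sum_const, mul_comm]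

lemma F_eq_zero_of_gt (a b t : ℕ) (c : ℤ) (h : (a : ℤ) * t < c) : F a b c t = 0 := by
  rw [F, Finset.card_eq_zero, Finset.filter_eq_empty_iff]
  intro x _
  have h1 := Fsum_le a b t x
  push_cast at h1 ⊢
  nlinarith

lemma F_eq_zero_of_lt (a b t : ℕ) (c : ℤ) (h : c < -((b : ℤ) * t)) : F a b c t = 0 := by
  rw [F, Finset.card_eq_zero, Finset.filter_eq_empty_iff]
  intro x _
  have h1 := Fsum_nonneg a b t x
  nlinarith

lemma key_s19 (a b t : ℕ) :
    F (2 * a) (2 * b) 0 t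
      = ∑ j ∈ Finset.Icc (-((b : ℤ) * t)) ((a : ℤ) * t), F a b j t * F a b (-j) t := by
  classical
  have h2 : (a + b) + (a + b) = 2 * a + 2 * b := by ring
  set U := Fin (a + b) → Fin (t + 1) with hU
  set S : U → ℤ := fun u => ∑ i, (u i : ℤ) with hS
  set E : (Fin (a + b) ⊕ Fin (a + b)) ≃ Fin (2 * a + 2 * b) :=
    finSumFinEquiv.trans (finCongr h2) with hE
  set T : Finset (U × U) :=
    Finset.univ.filter (fun p : U × U => S p.1 + S p.2 = ((2 * b : ℕ) : ℤ) * t + 0) with hT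
  have step1 : F (2 * a) (2 * b) 0 t = T.card := by
    rw [F]
    apply Finset.card_bij'
      (i := fun (x : Fin (2 * a + 2 * b) → Fin (t + 1)) _ =>
        ((fun i => x (E (Sum.inl i)), fun i => x (E (Sum.inr i))) : U × U))
      (j := fun (p : U × U) _ => fun k => Sum.elim p.1 p.2 (E.symm k))
    · intro x hx
      simp only [Finset.mem_filter, Finset.mem_univ, true_and] at hx ⊢
      rw [hT] at *
      simp only [Finset.mem_filter, Finset.mem_univ, true_and]
      have : S (fun i => x (E (Sum.inl i))) + S (fun i => x (E (Sum.inr i)))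
          = ∑ s : Fin (a + b) ⊕ Fin (a + b), (x (E s) : ℤ) := by
        rw [Fintype.sum_sum_type]
      rw [this, Fintype.sum_equiv E (fun s => (x (E s) : ℤ)) (fun k => (x k : ℤ)) (fun s => rfl)]
      exact hx
    · intro p hp
      simp only [hT, Finset.mem_filter, Finset.mem_univ, true_and] at hp ⊢
      rw [← Fintype.sum_equiv E (fun s => ((Sum.elim p.1 p.2 (E.symm (E s)) : Fin (t+1)) : ℤ))
        (fun k => ((Sum.elim p.1 p.2 (E.symm k) : Fin (t+1)) : ℤ)) (fun s => rfl)]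
      simp only [Equiv.symm_apply_apply]
      rw [Fintype.sum_sum_type]
      exact hp
    · intro x _
      funext k
      simp only [Sum.elim_comp_inl_inr]
      have : Sum.elim (fun i => x (E (Sum.inl i))) (fun i => x (E (Sum.inr i))) (E.symm k)
          = x (E (E.symm k)) := by cases h : E.symm k <;> simp [h]
      simpa using this
    · intro p _
      simp
  rw [step1]
  rw [Finset.card_eq_sum_card_fiberwise
    (f := fun p : U × U => S p.1 - (b : ℤ) * t) (t := Finset.Icc (-((b : ℤ) * t)) ((a : ℤ) * t))
    (by
      intro p hp
      simp only [hT, Finset.mem_filter, Finset.mem_univ, true_and] at hp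
      have h1 := Fsum_nonneg a b t p.1
      have h3 := Fsum_le a b t p.1
      simp only [Finset.mem_coe, Finset.mem_Icc]
      push_cast at h3
      constructor <;> [linarith [h1]; linarith [h3]])]
  apply Finset.sum_congr rfl
  intro j _
  rw [hT, Finset.filter_filter]
  have hpred : ∀ p : U × U,
      ((S p.1 + S p.2 = ((2 * b : ℕ) : ℤ) * t + 0) ∧ S p.1 - (b : ℤ) * t = j)
        ↔ (S p.1 = (b : ℤ) * t + j ∧ S p.2 = (b : ℤ) * t + (-j)) := by
    intro p
    push_cast
    constructor <;> intro h <;> constructor <;> linarith [h.1, h.2]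
  rw [Finset.filter_congr (fun p _ => hpred p)]
  rw [← Finset.univ_product_univ,
    Finset.filter_product (fun u : U => S u = (b : ℤ) * t + j)
      (fun u : U => S u = (b : ℤ) * t + (-j)), Finset.card_product]
  rfl

theorem stmt19 (a b t : ℕ) (ha : 1 ≤ a) (hb : 1 ≤ b) :
    2 * ∑ j ∈ Finset.range (t * min a b + 1), F a b (j : ℤ) t * F a b (-(j : ℤ)) t
      = F (2 * a) (2 * b) 0 t + (F a b 0 t) ^ 2 := by
  classical
  set K : ℕ := t * min a b with hK
  set g : ℤ → ℕ := fun j => F a b j t * F a b (-j) t with hg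
  have gsymm : ∀ j : ℤ, g (-j) = g j := by
    intro j; simp only [hg, neg_neg]; ring
  have gzero : ∀ j : ℤ, (K : ℤ) < j → g j = 0 := by
    intro j hj
    rcases min_cases a b with ⟨hm, _⟩ | ⟨hm, _⟩
    · have hKe : (K : ℤ) = (a : ℤ) * t := by rw [hK, hm]; push_cast; ring
      have : (a : ℤ) * t < j := by linarith [hj, hKe.symm.le]
      simp [hg, F_eq_zero_of_gt a b t j this]
    · have hKe : (K : ℤ) = (b : ℤ) * t := by rw [hK, hm]; push_cast; ring
      have : -j < -((b : ℤ) * t) := by linarith [hj, hKe.symm.le]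
      simp [hg, F_eq_zero_of_lt a b t (-j) this]
  have hKa : (K : ℤ) ≤ (a : ℤ) * t := by
    have h1 : K ≤ a * t := by
      rw [hK]; calc t * min a b ≤ t * a := Nat.mul_le_mul_left t (min_le_left a b)
        _ = a * t := Nat.mul_comm t a
    exact_mod_cast h1
  have hKb : (K : ℤ) ≤ (b : ℤ) * t := by
    have h1 : K ≤ b * t := by
      rw [hK]; calc t * min a b ≤ t * b := Nat.mul_le_mul_left t (min_le_right a b)
        _ = b * t := Nat.mul_comm t b
    exact_mod_cast h1
  have step2 : ∑ j ∈ Finset.Icc (-(K : ℤ)) (K : ℤ), g j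
      = ∑ j ∈ Finset.Icc (-((b : ℤ) * t)) ((a : ℤ) * t), g j := by
    apply Finset.sum_subset
    · intro x hx
      simp only [Finset.mem_Icc] at hx ⊢
      exact ⟨by linarith [hx.1], by linarith [hx.2]⟩
    · intro x _ hx
      simp only [Finset.mem_Icc] at hx
      rcases lt_or_ge (K : ℤ) x with h | h
      · exact gzero x h
      · have h3 : x < -(K : ℤ) := by
          by_contra hc
          push_neg at hc
          exact hx ⟨hc, h⟩
        have : (K : ℤ) < -x := by linarith
        rw [← gsymm x]; exact gzero (-x) this
  have hsplit : Finset.Icc (-(K : ℤ)) (K : ℤ)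
      = Finset.Ico (-(K : ℤ)) 0 ∪ Finset.Icc 0 (K : ℤ) := by
    ext x; simp only [Finset.mem_Icc, Finset.mem_union, Finset.mem_Ico]; omega
  have hdisj : Disjoint (Finset.Ico (-(K : ℤ)) 0) (Finset.Icc 0 (K : ℤ)) := by
    rw [Finset.disjoint_left]
    intro x hx hx'
    simp only [Finset.mem_Icc, Finset.mem_Ico] at hx hx'
    omega
  have hneg : ∑ j ∈ Finset.Ico (-(K : ℤ)) 0, g j = ∑ j ∈ Finset.Icc (1 : ℤ) (K : ℤ), g j := by
    apply Finset.sum_nbij' (i := fun z => -z) (j := fun z => -z)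
    · intro z hz; simp only [Finset.mem_Icc, Finset.mem_Ico] at *; omega
    · intro z hz; simp only [Finset.mem_Icc, Finset.mem_Ico] at *; omega
    · intro z _; ring
    · intro z _; ring
    · intro z _; rw [gsymm]
  have hicc0 : ∑ j ∈ Finset.Icc (0 : ℤ) (K : ℤ), g j
      = g 0 + ∑ j ∈ Finset.Icc (1 : ℤ) (K : ℤ), g j := by
    have : Finset.Icc (0 : ℤ) (K : ℤ) = insert 0 (Finset.Icc (1 : ℤ) (K : ℤ)) := by
      ext x; simp only [Finset.mem_Icc, Finset.mem_insert]; omega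
    rw [this, Finset.sum_insert (by simp)]
  have hrange : ∑ j ∈ Finset.range (K + 1), g (j : ℤ) = ∑ j ∈ Finset.Icc (0 : ℤ) (K : ℤ), g j := by
    apply Finset.sum_nbij' (i := fun n : ℕ => (n : ℤ)) (j := fun z => z.toNat)
    · intro n hn; simp only [Finset.mem_range, Finset.mem_Icc] at *; omega
    · intro z hz; simp only [Finset.mem_range, Finset.mem_Icc] at *; omega
    · intro n _; simp
    · intro z hz; simp only [Finset.mem_Icc] at hz; omega
    · intro n _; rfl
  have hg0 : g 0 = (F a b 0 t) ^ 2 := by simp [hg, sq]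
  calc 2 * ∑ j ∈ Finset.range (t * min a b + 1), F a b (j : ℤ) t * F a b (-(j : ℤ)) t
      = 2 * ∑ j ∈ Finset.range (K + 1), g (j : ℤ) := rfl
    _ = 2 * (g 0 + ∑ j ∈ Finset.Icc (1 : ℤ) (K : ℤ), g j) := by rw [hrange, hicc0]
    _ = (∑ j ∈ Finset.Icc (1 : ℤ) (K : ℤ), g j + (g 0 + ∑ j ∈ Finset.Icc (1 : ℤ) (K : ℤ), g j)) + g 0 := by ring
    _ = (∑ j ∈ Finset.Ico (-(K : ℤ)) 0, g j + ∑ j ∈ Finset.Icc (0 : ℤ) (K : ℤ), g j) + g 0 := by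
        rw [hneg, hicc0]
    _ = ∑ j ∈ Finset.Icc (-(K : ℤ)) (K : ℤ), g j + g 0 := by
        rw [hsplit, Finset.sum_union hdisj]
    _ = F (2 * a) (2 * b) 0 t + (F a b 0 t) ^ 2 := by
        rw [step2, ← key_s19 a b t, hg0]
end
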